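/- Let V be a nonempty finite type, T ≥ 1, and for each t = 1,…,T let K_t : V → V → ℝ be a Markov transition kernel on V with K_t(x,y) > 0 for all x,y. Fix β > 0, r : V → ℝ, and define partial rewards r_0 := r and r_t(x) := β·log( Σ_{x_0,…,x_{t-1}} (∏_{u=1}^{t} K_u(x_u,x_{u-1}))·exp(r(x_0)/β) ) at x_t = x. Then for every 1 ≤ t ≤ T and every x ∈ V, the maximum over all PMFs p on V of the per-step objective Σ_{y∈V} p(y)·r_{t-1}(y) − β·D(p‖K_t(x,·)) equals r_t(x). -/

import Mathlib

noncomputable section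

/-- Extend a path `x_0,…,x_{t-1}` (given by `path : Fin t → V`) to all of `ℕ`
by setting `x_i = x` for every `i ≥ t`; in particular the endpoint is `x_t = x`. -/
def seqExt {V : Type*} {t : ℕ} (path : Fin t → V) (x : V) (i : ℕ) : V :=
  if h : i < t then path ⟨i, h⟩ else x

/-- `pathSum K r β t x = Σ_{x_0,…,x_{t-1} ∈ V} (∏_{u=1}^{t} K_u(x_u, x_{u-1})) · exp(r(x_0)/β)`,
evaluated at `x_t = x`. -/
def pathSum {V : Type*} [Fintype V] (K : ℕ → V → V → ℝ) (r : V → ℝ) (β : ℝ)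
    (t : ℕ) (x : V) : ℝ :=
  ∑ path : Fin t → V,
    (∏ u ∈ Finset.range t, K (u + 1) (seqExt path x (u + 1)) (seqExt path x u)) *
      Real.exp (r (seqExt path x 0) / β)

/-- The partial rewards: `r_0 := r` and `r_t(x) := β · log(pathSum K r β t x)` for `t ≥ 1`. -/
def partialReward {V : Type*} [Fintype V] (K : ℕ → V → V → ℝ) (r : V → ℝ) (β : ℝ) :
    ℕ → V → ℝ
  | 0 => r
  | t + 1 => fun x => β * Real.log (pathSum K r β (t + 1) x)

end

/-- KL divergence between two finitely supported distributions,
with the convention `0 · log 0 = 0` (automatic since `Real.log 0 = 0`). -/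
noncomputable def klDiv {V : Type*} [Fintype V] (p q : V → ℝ) : ℝ :=
  ∑ x, p x * Real.log (p x / q x)

/-!
The one-step problem is the Gibbs (Donsker–Varadhan) variational principle: for weights `q > 0`,
`Σ p f - β D(p‖q) = β log Z - β D(p‖g)` where `Z = Σ q e^{f/β}` and `g = q e^{f/β} / Z`,
so the maximum is `β log Z`, attained at `p = g`. Splitting off the last step of each path
shows `e^{r_{t}/β} = Σ_y K_t(·,y) e^{r_{t-1}(y)/β}`, which identifies `β log Z` with `r_t`.
-/

open Finset Real

lemma sub_le_mul_log_div {a b : ℝ} (ha : 0 ≤ a) (hb : 0 < b) : a - b ≤ a * log (a / b) := by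
  rcases ha.eq_or_lt with rfl | ha
  · simpa using hb.le
  · have h := one_sub_inv_le_log_of_pos (div_pos ha hb)
    rw [inv_div] at h
    calc a - b = a * (1 - b / a) := by field_simp
      _ ≤ a * log (a / b) := mul_le_mul_of_nonneg_left h ha.le

section Gibbs

variable {V : Type*} [Fintype V]

lemma klDiv_nonneg {p q : V → ℝ} (hp : ∀ y, 0 ≤ p y) (hq : ∀ y, 0 < q y)
    (hp1 : ∑ y, p y = 1) (hq1 : ∑ y, q y = 1) : 0 ≤ klDiv p q := by
  have h : ∑ y, (p y - q y) ≤ klDiv p q :=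
    sum_le_sum fun y _ => sub_le_mul_log_div (hp y) (hq y)
  rwa [sum_sub_distrib, hp1, hq1, sub_self] at h

lemma klDiv_self (p : V → ℝ) : klDiv p p = 0 :=
  sum_eq_zero fun y _ => by by_cases h : p y = 0 <;> simp [h]

noncomputable def gibbsDist (β : ℝ) (f q : V → ℝ) (y : V) : ℝ :=
  q y * exp (f y / β) / ∑ z, q z * exp (f z / β)

variable [Nonempty V] {β : ℝ} {f q : V → ℝ}

lemma partitionFn_pos (hq : ∀ y, 0 < q y) : 0 < ∑ y, q y * exp (f y / β) :=
  sum_pos (fun y _ => mul_pos (hq y) (exp_pos _)) univ_nonempty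

lemma gibbsDist_pos (hq : ∀ y, 0 < q y) (y : V) : 0 < gibbsDist β f q y :=
  div_pos (mul_pos (hq y) (exp_pos _)) (partitionFn_pos hq)

lemma sum_gibbsDist (hq : ∀ y, 0 < q y) : ∑ y, gibbsDist β f q y = 1 := by
  unfold gibbsDist
  rw [← sum_div, div_self (partitionFn_pos hq).ne']

lemma log_gibbsDist_div (hq : ∀ y, 0 < q y) (y : V) :
    log (gibbsDist β f q y / q y) = f y / β - log (∑ z, q z * exp (f z / β)) := by
  have hratio : gibbsDist β f q y / q y = exp (f y / β) / ∑ z, q z * exp (f z / β) := by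
    unfold gibbsDist
    field_simp [(hq y).ne']
  rw [hratio, log_div (exp_pos _).ne' (partitionFn_pos hq).ne', log_exp]

lemma klDiv_eq_klDiv_gibbsDist_add {p : V → ℝ} (hp : ∀ y, 0 ≤ p y) (hp1 : ∑ y, p y = 1)
    (hq : ∀ y, 0 < q y) :
    klDiv p q = klDiv p (gibbsDist β f q) +
      ((∑ y, p y * f y) / β - log (∑ z, q z * exp (f z / β))) := by
  have hpoint : ∀ y, p y * log (p y / q y) = p y * log (p y / gibbsDist β f q y) +
      p y * (f y / β - log (∑ z, q z * exp (f z / β))) := fun y => by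
    rcases (hp y).eq_or_lt with h | h
    · simp [← h]
    · rw [← log_gibbsDist_div hq, ← mul_add,
        ← log_mul (div_pos h (gibbsDist_pos hq y)).ne' (div_pos (gibbsDist_pos hq y) (hq y)).ne',
        div_mul_div_cancel₀ (gibbsDist_pos hq y).ne']
  simp only [klDiv, hpoint, sum_add_distrib, mul_sub, sum_sub_distrib, ← sum_mul, hp1,
    one_mul, sum_div, mul_div_assoc]

lemma sum_mul_sub_mul_klDiv_eq (hβ : 0 < β) {p : V → ℝ} (hp : ∀ y, 0 ≤ p y)
    (hp1 : ∑ y, p y = 1) (hq : ∀ y, 0 < q y) :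
    ∑ y, p y * f y - β * klDiv p q =
      β * log (∑ y, q y * exp (f y / β)) - β * klDiv p (gibbsDist β f q) := by
  rw [klDiv_eq_klDiv_gibbsDist_add hp hp1 hq, mul_add, mul_sub, mul_div_cancel₀ _ hβ.ne']
  ring

theorem isGreatest_gibbs_variational (hβ : 0 < β) (hq : ∀ y, 0 < q y) :
    IsGreatest {v : ℝ | ∃ p : V → ℝ, (∀ y, 0 ≤ p y) ∧ (∑ y, p y = 1) ∧
      v = ∑ y, p y * f y - β * klDiv p q}
      (β * log (∑ y, q y * exp (f y / β))) := by
  constructor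
  · refine ⟨gibbsDist β f q, fun y => (gibbsDist_pos hq y).le, sum_gibbsDist hq, ?_⟩
    rw [sum_mul_sub_mul_klDiv_eq hβ (fun y => (gibbsDist_pos hq y).le) (sum_gibbsDist hq) hq,
      klDiv_self, mul_zero, sub_zero]
  · rintro v ⟨p, hp, hp1, rfl⟩
    rw [sum_mul_sub_mul_klDiv_eq hβ hp hp1 hq, sub_le_self_iff]
    exact mul_nonneg hβ.le (klDiv_nonneg hp (gibbsDist_pos hq) hp1 (sum_gibbsDist hq))

end Gibbs

section Paths

variable {V : Type*}

lemma seqExt_of_le {t : ℕ} (path : Fin t → V) (x : V) {i : ℕ} (hi : t ≤ i) :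
    seqExt path x i = x :=
  dif_neg hi.not_gt

lemma seqExt_snoc {s : ℕ} (path : Fin s → V) (y x : V) {u : ℕ} (hu : u ≤ s) :
    seqExt (Fin.snoc path y) x u = seqExt path y u := by
  rcases hu.lt_or_eq with hu | rfl
  · simp [seqExt, hu, hu.trans (Nat.lt_succ_self s), Fin.snoc]
  · rw [seqExt_of_le path y le_rfl]
    simp [seqExt, Fin.snoc]

variable [Fintype V] (K : ℕ → V → V → ℝ) (r : V → ℝ) (β : ℝ)

lemma pathSum_zero (x : V) : pathSum K r β 0 x = exp (r x / β) := by
  simp [pathSum, seqExt]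

lemma pathSum_succ (s : ℕ) (x : V) :
    pathSum K r β (s + 1) x = ∑ y, K (s + 1) x y * pathSum K r β s y := by
  rw [pathSum, ← (Fin.snocEquiv fun _ : Fin (s + 1) => V).sum_comp, Fintype.sum_prod_type]
  refine sum_congr rfl fun y _ => ?_
  rw [pathSum, mul_sum]
  refine sum_congr rfl fun path _ => ?_
  have hprefix : ∀ u ∈ range s,
      K (u + 1) (seqExt (Fin.snoc path y) x (u + 1)) (seqExt (Fin.snoc path y) x u)
        = K (u + 1) (seqExt path y (u + 1)) (seqExt path y u) := fun u hu => by
    rw [seqExt_snoc path y x (mem_range.1 hu), seqExt_snoc path y x (mem_range.1 hu).le]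
  simp only [Fin.snocEquiv, Equiv.coe_fn_mk]
  rw [prod_range_succ, prod_congr rfl hprefix, seqExt_of_le _ x le_rfl,
    seqExt_snoc path y x le_rfl, seqExt_of_le path y le_rfl, seqExt_snoc path y x s.zero_le]
  ring

variable [Nonempty V]

lemma pathSum_pos {t : ℕ} (hK : ∀ u < t, ∀ x y, 0 < K (u + 1) x y) (x : V) :
    0 < pathSum K r β t x :=
  sum_pos (fun _ _ => mul_pos (prod_pos fun u hu => hK u (mem_range.1 hu) _ _) (exp_pos _))
    univ_nonempty

lemma exp_partialReward_div {β : ℝ} (hβ : 0 < β) {t : ℕ}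
    (hK : ∀ u < t, ∀ x y, 0 < K (u + 1) x y) (x : V) :
    exp (partialReward K r β t x / β) = pathSum K r β t x := by
  cases t with
  | zero => exact (pathSum_zero K r β x).symm
  | succ s =>
    rw [partialReward, mul_div_cancel_left₀ _ hβ.ne', exp_log (pathSum_pos K r β hK x)]

lemma partialReward_succ {β : ℝ} (hβ : 0 < β) {s : ℕ} (hK : ∀ u < s, ∀ x y, 0 < K (u + 1) x y)
    (x : V) :
    partialReward K r β (s + 1) x =
      β * log (∑ y, K (s + 1) x y * exp (partialReward K r β s y / β)) := by
  simp only [exp_partialReward_div K r hβ hK, ← pathSum_succ]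
  rfl

end Paths

theorem partialReward_is_optimal_value_general
    {V : Type*} [Fintype V]
    (T : ℕ)
    (K : ℕ → V → V → ℝ)
    (hK_pos : ∀ t, 1 ≤ t → t ≤ T → ∀ x y, 0 < K t x y)
    (β : ℝ) (hβ : 0 < β) (r : V → ℝ) :
    ∀ t, 1 ≤ t → t ≤ T → ∀ x : V,
      IsGreatest
        {v : ℝ | ∃ p : V → ℝ, (∀ y, 0 ≤ p y) ∧ (∑ y, p y = 1) ∧
          v = ∑ y, p y * partialReward K r β (t - 1) y - β * klDiv p (K t x)}
        (partialReward K r β t x) := by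
  intro t ht htT x
  have : Nonempty V := ⟨x⟩
  obtain ⟨s, rfl⟩ := Nat.exists_eq_add_of_le' ht
  rw [partialReward_succ K r hβ (fun u hu => hK_pos (u + 1) (by omega) (by omega)),
    Nat.add_sub_cancel]
  exact isGreatest_gibbs_variational hβ (hK_pos (s + 1) ht htT x)

/-- The partial reward `r_t(x)` is the optimal value of the per-step KL-regularized
objective: the maximum over PMFs `p` of `Σ_y p(y)·r_{t-1}(y) − β·D(p‖K_t(x,·))`
equals `r_t(x)`, for every `1 ≤ t ≤ T` and every `x`. -/
theorem partialReward_is_optimal_value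
    {V : Type*} [Fintype V] [Nonempty V]
    (T : ℕ) (hT : 1 ≤ T)
    (K : ℕ → V → V → ℝ)
    (hK_pos : ∀ t, 1 ≤ t → t ≤ T → ∀ x y, 0 < K t x y)
    (hK_sum : ∀ t, 1 ≤ t → t ≤ T → ∀ x, ∑ y, K t x y = 1)
    (β : ℝ) (hβ : 0 < β) (r : V → ℝ) :
    ∀ t, 1 ≤ t → t ≤ T → ∀ x : V,
      IsGreatest
        {v : ℝ | ∃ p : V → ℝ, (∀ y, 0 ≤ p y) ∧ (∑ y, p y = 1) ∧
          v = ∑ y, p y * partialReward K r β (t - 1) y - β * klDiv p (K t x)}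
        (partialReward K r β t x) :=
  partialReward_is_optimal_value_general T K hK_pos β hβ r
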